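/- arXiv:2405.03790 — 4 statements merged into one kernel-verified Lean document; each statement's English description precedes it below -/
import Mathlib

section
/- Let a, b, s, t be positive integers and p a prime such that (s+1)(st+1) = p^a and (t+1)(st+1) = p^b. Then p = 2. -/
theorem stmt_0 (a b s t p : ℕ) (ha : 0 < a) (hb : 0 < b) (hs : 0 < s) (ht : 0 < t)
    (hp : p.Prime) (h1 : (s + 1) * (s * t + 1) = p ^ a)
    (h2 : (t + 1) * (s * t + 1) = p ^ b) : p = 2 := by
  have key : ∀ n : ℕ, 1 < n → n ∣ p ^ a → p ∣ n := by
    intro n hn hd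
    have hq := Nat.minFac_prime (by omega : n ≠ 1)
    have hqp : n.minFac ∣ p ^ a := (Nat.minFac_dvd n).trans hd
    have : n.minFac = p := (Nat.prime_dvd_prime_iff_eq hq hp).mp (hq.dvd_of_dvd_pow hqp)
    exact this ▸ Nat.minFac_dvd n
  have hds : p ∣ s + 1 := key _ (by omega) ⟨s * t + 1, h1.symm⟩
  have hdst : p ∣ s * t + 1 := key _ (by nlinarith) ⟨s + 1, by rw [mul_comm]; exact h1.symm⟩
  have hdt : p ∣ t + 1 := by
    have : ∀ n : ℕ, 1 < n → n ∣ p ^ b → p ∣ n := by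
      intro n hn hd
      have hq := Nat.minFac_prime (by omega : n ≠ 1)
      have hqp : n.minFac ∣ p ^ b := (Nat.minFac_dvd n).trans hd
      have : n.minFac = p := (Nat.prime_dvd_prime_iff_eq hq hp).mp (hq.dvd_of_dvd_pow hqp)
      exact this ▸ Nat.minFac_dvd n
    exact this _ (by omega) ⟨s * t + 1, h2.symm⟩
  have hmul : p ∣ (s + 1) * (t + 1) := hds.mul_right _
  have heq : (s + 1) * (t + 1) = (s * t + 1) + (s + t) := by ring
  have hst : p ∣ s + t := by
    have := Nat.dvd_sub hmul hdst
    simpa [heq] using this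
  have h2' : p ∣ 2 := by
    have : p ∣ (s + t) + 2 := by
      have := Nat.dvd_add hds hdt
      have e : (s + 1) + (t + 1) = (s + t) + 2 := by ring
      rwa [e] at this
    simpa using Nat.dvd_sub this hst
  have := Nat.le_of_dvd (by norm_num) h2'
  have := hp.two_le
  omega
end

section
/- Let G be a finite group which is an internal semidirect product G = N ⋊ K with gcd(|N|, |K|) = 1, and let g ∈ G be an element whose order divides |K|. Then g lies in some conjugate K^h of K (h ∈ G). -/
/-!
Put `L = N ⊔ ⟨g⟩`. As `orderOf g` is prime to `|N|`, both `⟨g⟩` and `K ⊓ L` are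
complements of `N` in `L`, and `L ⧸ N` is cyclic; so it suffices that complements of a normal
Hall subgroup with abelian quotient are conjugate.

That is proved by induction on the order of the group. Let `p` be a prime dividing the index
and `x ∈ H` of order `p`. Then `N ⊔ ⟨x⟩` is normal (it contains the commutator subgroup),
and its Sylow `p`-subgroups are its complements to `N`, of order `p`; so after conjugating `H`,
both `H` and `K` meet it in the same subgroup `P ≠ 1`, which they both normalize. If `P` is
normal, induct in `G ⧸ P`; otherwise induct in the normalizer of `P`.
-/

open Subgroup
open scoped Pointwise commutatorElement

namespace Subgroup

variable {G : Type*} [Group G]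

section Complement

variable {N K : Subgroup G}

theorem IsComplement'.subgroupOf_of_forall_mul_mem {M : Subgroup G} (h : N.IsComplement' K)
    (hM : ∀ n ∈ N, ∀ k ∈ K, n * k ∈ M → k ∈ M) :
    (N.subgroupOf M).IsComplement' (K.subgroupOf M) := by
  refine isComplement'_of_disjoint_and_mul_eq_univ ?_ (Set.eq_univ_of_forall fun m => ?_)
  · exact disjoint_def.mpr fun hxN hxK => Subtype.ext (disjoint_def.mp h.disjoint hxN hxK)
  obtain ⟨⟨n, k⟩, hnk, -⟩ := h.existsUnique m
  have hkM : (k : G) ∈ M := hM n n.2 k k.2 (hnk ▸ m.2)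
  have hnM : (n : G) ∈ M := by
    have := mul_mem m.2 (inv_mem hkM)
    rwa [← hnk, mul_inv_cancel_right] at this
  exact ⟨⟨n, hnM⟩, n.2, ⟨k, hkM⟩, k.2, Subtype.ext hnk⟩

theorem IsComplement'.subgroupOf_of_le_left {M : Subgroup G} (h : N.IsComplement' K)
    (hNM : N ≤ M) : (N.subgroupOf M).IsComplement' (K.subgroupOf M) :=
  h.subgroupOf_of_forall_mul_mem fun _ hn _ _ hnk => by
    simpa using mul_mem (inv_mem (hNM hn)) hnk

theorem IsComplement'.subgroupOf_of_le_right {M : Subgroup G} (h : N.IsComplement' K)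
    (hKM : K ≤ M) : (N.subgroupOf M).IsComplement' (K.subgroupOf M) :=
  h.subgroupOf_of_forall_mul_mem fun _ _ _ hk _ => hKM hk

theorem IsComplement'.map_of_ker_le {G' : Type*} [Group G'] {f : G →* G'}
    (h : N.IsComplement' K) (hf : Function.Surjective f) (hker : f.ker ≤ K) :
    (N.map f).IsComplement' (K.map f) := by
  refine isComplement'_of_disjoint_and_mul_eq_univ ?_ (Set.eq_univ_of_forall fun y => ?_)
  · refine disjoint_def.mpr ?_
    rintro _ ⟨n, hn, rfl⟩ ⟨k, hk, hkn⟩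
    have hnK : n ∈ K := by
      simpa using mul_mem hk (hker (show k⁻¹ * n ∈ f.ker by simp [MonoidHom.mem_ker, hkn]))
    rw [disjoint_def.mp h.disjoint hn hnK, map_one]
  obtain ⟨x, rfl⟩ := hf y
  obtain ⟨⟨n, k⟩, hnk, -⟩ := h.existsUnique x
  exact ⟨f n, mem_map_of_mem f n.2, f k, mem_map_of_mem f k.2,
    (map_mul f (n : G) k).symm.trans (congrArg f hnk)⟩

theorem IsComplement'.conj_smul (h : N.IsComplement' K) (g : G) :
    (MulAut.conj g • N).IsComplement' (MulAut.conj g • K) :=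
  h.map_of_ker_le (MulAut.conj g).surjective fun x hx =>
    (show x = 1 from (MulAut.conj g).injective (by simpa using hx)) ▸ one_mem K

theorem isComplement'_subgroupOf_sup {A : Subgroup G} [N.Normal] (h : Disjoint N A) :
    (N.subgroupOf (N ⊔ A)).IsComplement' (A.subgroupOf (N ⊔ A)) := by
  refine isComplement'_of_disjoint_and_mul_eq_univ ?_ (Set.eq_univ_of_forall fun m => ?_)
  · exact disjoint_def.mpr fun hxN hxA => Subtype.ext (disjoint_def.mp h hxN hxA)
  obtain ⟨n, hn, a, ha, hna⟩ : (m : G) ∈ (N : Set G) * A := normal_mul N A ▸ m.2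
  exact ⟨⟨n, mem_sup_left hn⟩, hn, ⟨a, mem_sup_right ha⟩, ha, Subtype.ext hna⟩

end Complement

theorem card_subgroupOf_of_le {H K : Subgroup G} (h : H ≤ K) :
    Nat.card (H.subgroupOf K) = Nat.card H :=
  Nat.card_congr (subgroupOfEquivOfLe h).toEquiv

theorem card_quotient_lt [Finite G] {P : Subgroup G} (hP : P ≠ ⊥) :
    Nat.card (G ⧸ P) < Nat.card G := by
  rw [card_eq_card_quotient_mul_card_subgroup P]
  exact lt_mul_of_one_lt_right Nat.card_pos ((one_lt_card_iff_ne_bot P).mpr hP)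

theorem card_lt_of_ne_top [Finite G] {M : Subgroup G} (hM : M ≠ ⊤) :
    Nat.card M < Nat.card G :=
  (card_le_card_group M).lt_of_ne (mt (eq_top_of_card_eq M) hM)

section Commutator

theorem normal_of_commutator_le {L : Subgroup G} (h : _root_.commutator G ≤ L) : L.Normal where
  conj_mem n hn g := by
    have : ⁅g, n⁆ ∈ L := h (commutator_mem_commutator (mem_top g) (mem_top n))
    simpa [commutatorElement_def] using mul_mem this hn

theorem commutator_le_map {G' : Type*} [Group G'] {f : G →* G'} (hf : Function.Surjective f)
    {N : Subgroup G} (h : _root_.commutator G ≤ N) : _root_.commutator G' ≤ N.map f := by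
  rw [_root_.commutator_def, ← map_top_of_surjective f hf, ← map_commutator,
    ← _root_.commutator_def]
  exact map_mono h

theorem commutator_le_subgroupOf {N : Subgroup G} (h : _root_.commutator G ≤ N)
    (M : Subgroup G) : _root_.commutator M ≤ N.subgroupOf M := by
  refine map_le_iff_le_comap.mp (le_trans ?_ h)
  rw [_root_.commutator_def, map_commutator, _root_.commutator_def]
  exact commutator_mono le_top le_top

theorem commutator_le_subgroupOf_sup_zpowers (N : Subgroup G) [N.Normal] (g : G) :
    _root_.commutator ↥(N ⊔ zpowers g) ≤ N.subgroupOf (N ⊔ zpowers g) := by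
  have hL : N ⊔ zpowers g ≤ (zpowers (g : G ⧸ N)).comap (QuotientGroup.mk' N) :=
    sup_le (fun x hx => by simp [(QuotientGroup.eq_one_iff x).mpr hx])
      (zpowers_le.mpr (mem_zpowers _))
  rw [_root_.commutator_def, commutator_le]
  rintro x - y -
  obtain ⟨i, hi⟩ := mem_zpowers_iff.mp (hL x.2)
  obtain ⟨j, hj⟩ := mem_zpowers_iff.mp (hL y.2)
  have hxy : ((⁅x, y⁆ : ↥(N ⊔ zpowers g)) : G) = ⁅(x : G), (y : G)⁆ :=
    map_commutatorElement (N ⊔ zpowers g).subtype x y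
  rw [mem_subgroupOf, ← QuotientGroup.eq_one_iff, hxy, ← QuotientGroup.mk'_apply,
    map_commutatorElement, ← hi, ← hj]
  exact commutatorElement_eq_one_iff_commute.mpr (Commute.zpow_zpow_self _ _ _)

end Commutator

section Conjugation

theorem le_normalizer_inf (A L : Subgroup G) [hL : L.Normal] :
    A ≤ normalizer ((A ⊓ L : Subgroup G) : Set G) :=
  le_normalizer_iff.mpr fun a ha k hk => mem_inf.mpr
    ⟨mul_mem (mul_mem ha (mem_inf.mp hk).1) (inv_mem ha), hL.conj_mem k (mem_inf.mp hk).2 a⟩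

theorem conj_smul_eq_of_subgroupOf {A B M : Subgroup G} (hA : A ≤ M) (hB : B ≤ M) {g : M}
    (h : MulAut.conj g • A.subgroupOf M = B.subgroupOf M) : MulAut.conj (g : G) • A = B := by
  rwa [conj_smul_subgroupOf hA, subgroupOf_inj, inf_eq_left.mpr hB,
    inf_eq_left.mpr (conj_smul_le_of_le hA g)] at h

theorem map_conj_smul {G' : Type*} [Group G'] (f : G →* G') (g : G) (H : Subgroup G) :
    (MulAut.conj g • H).map f = MulAut.conj (f g) • H.map f := by
  change map f (map (MulAut.conj g).toMonoidHom H) =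
    map (MulAut.conj (f g)).toMonoidHom (map f H)
  rw [map_map, map_map]
  congr 1
  ext x
  simp

theorem conj_smul_eq_of_map_mk' {H K P : Subgroup G} [hP : P.Normal] (hPH : P ≤ H)
    (hPK : P ≤ K) {g : G}
    (h : MulAut.conj (QuotientGroup.mk' P g) • H.map (QuotientGroup.mk' P) =
      K.map (QuotientGroup.mk' P)) :
    MulAut.conj g • H = K := by
  have hPgH : P ≤ MulAut.conj g • H := by
    rw [← hP.conj_smul_eq_self g]
    exact pointwise_smul_le_pointwise_smul_iff.mpr hPH
  rw [← map_conj_smul] at h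
  rw [← comap_map_eq_self (H := MulAut.conj g • H) (f := QuotientGroup.mk' P)
    (by rwa [QuotientGroup.ker_mk']), h, comap_map_eq_self (by rwa [QuotientGroup.ker_mk'])]

theorem exists_conj_smul_eq_of_isPGroup [Finite G] {p : ℕ} [Fact p.Prime] {P Q : Subgroup G}
    (hP : IsPGroup p P) (hQ : IsPGroup p Q) (hPi : ¬ p ∣ P.index) (hQi : ¬ p ∣ Q.index) :
    ∃ g : G, MulAut.conj g • P = Q := by
  obtain ⟨g, hg⟩ := MulAction.exists_smul_eq G (hP.toSylow hPi) (hQ.toSylow hQi)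
  exact ⟨g, by simpa [Sylow.ext_iff, Sylow.coe_subgroup_smul] using hg⟩

theorem exists_conj_smul_eq_of_isComplement'_of_index_eq_pow [Finite G] {N H K : Subgroup G}
    {p k : ℕ} [Fact p.Prime] (hNp : N.index = p ^ k) (hpN : ¬ p ∣ Nat.card N)
    (hH : N.IsComplement' H) (hK : N.IsComplement' K) : ∃ g : G, MulAut.conj g • H = K :=
  exists_conj_smul_eq_of_isPGroup (.of_card (hH.symm.index_eq_card ▸ hNp))
    (.of_card (hK.symm.index_eq_card ▸ hNp)) (hH.index_eq_card ▸ hpN) (hK.index_eq_card ▸ hpN)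

end Conjugation

section SchurZassenhaus

variable [Finite G] {N H K : Subgroup G} [N.Normal]

theorem exists_normal_conj_smul_inf_eq (hcop : (Nat.card N).Coprime N.index)
    (hcomm : _root_.commutator G ≤ N) (hH : N.IsComplement' H) (hK : N.IsComplement' K)
    (hN : N ≠ ⊤) :
    ∃ L : Subgroup G, L.Normal ∧ K ⊓ L ≠ ⊥ ∧
      ∃ a : G, MulAut.conj a • H ⊓ L = K ⊓ L := by
  set p := N.index.minFac
  have hp : p.Prime := Nat.minFac_prime (mt index_eq_one.mp hN)
  have : Fact p.Prime := ⟨hp⟩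
  have hpN : ¬ p ∣ Nat.card N := fun hpN =>
    hp.one_lt.ne' (Nat.eq_one_of_dvd_coprimes hcop hpN N.index.minFac_dvd)
  obtain ⟨x, hx⟩ := exists_prime_orderOf_dvd_card' (G := H) p
    (hH.symm.index_eq_card ▸ N.index.minFac_dvd)
  set L := N ⊔ zpowers (x : G)
  have hNL : N ≤ L := le_sup_left
  have hHL := hH.subgroupOf_of_le_left hNL
  have hKL := hK.subgroupOf_of_le_left hNL
  have hLN : (N.subgroupOf L).index = p := by
    rw [(isComplement'_subgroupOf_sup (hH.disjoint.mono_right (zpowers_le.mpr x.2))).symm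
      |>.index_eq_card, card_subgroupOf_of_le le_sup_right, Nat.card_zpowers, orderOf_coe, hx]
  obtain ⟨b, hb⟩ := exists_conj_smul_eq_of_isComplement'_of_index_eq_pow (k := 1)
    (by rw [pow_one, hLN]) (card_subgroupOf_of_le hNL ▸ hpN) hHL hKL
  rw [← inf_subgroupOf_right H, ← inf_subgroupOf_right K] at hb
  refine ⟨L, normal_of_commutator_le (hcomm.trans hNL), fun hbot => hp.one_lt.ne' ?_, b, ?_⟩
  · rw [← hLN, hKL.symm.index_eq_card, ← inf_subgroupOf_right, hbot, bot_subgroupOf, card_bot]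
  · rw [← conj_smul_eq_of_subgroupOf inf_le_right inf_le_right hb, smul_inf,
      conj_smul_eq_self_of_mem b.2]

theorem exists_conj_smul_eq_of_isComplement'_of_commutator_le
    (hcop : (Nat.card N).Coprime N.index) (hcomm : _root_.commutator G ≤ N)
    (hH : N.IsComplement' H) (hK : N.IsComplement' K) :
    ∃ g : G, MulAut.conj g • H = K := by
  induction hG : Nat.card G using Nat.strong_induction_on generalizing G with
  | _ n ih =>
  subst hG
  by_cases hN : N = ⊤
  · subst hN
    exact ⟨1, by rw [isComplement'_top_left.mp hH, isComplement'_top_left.mp hK, smul_bot]⟩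
  obtain ⟨L, hL, hP, a, ha⟩ := exists_normal_conj_smul_inf_eq hcop hcomm hH hK hN
  set H₁ := MulAut.conj a • H
  suffices ∃ g : G, MulAut.conj g • H₁ = K by
    obtain ⟨g, hg⟩ := this
    exact ⟨g * a, by rw [map_mul, mul_smul, hg]⟩
  have hH₁ : N.IsComplement' H₁ := Normal.conj_smul_eq_self a N ▸ hH.conj_smul a
  set P := K ⊓ L
  have hPH₁ : P ≤ H₁ := ha ▸ inf_le_left
  by_cases hPn : normalizer (P : Set G) = ⊤
  · have : P.Normal := normalizer_eq_top_iff.mp hPn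
    set π := QuotientGroup.mk' P
    have hπ : Function.Surjective π := QuotientGroup.mk'_surjective P
    have hker : π.ker = P := QuotientGroup.ker_mk' P
    have : (N.map π).Normal := Normal.map ‹_› π hπ
    obtain ⟨g, hg⟩ := ih _ (card_quotient_lt hP) (N := N.map π) (H := H₁.map π)
      (K := K.map π)
      ((hcop.coprime_dvd_left (card_map_dvd N π)).coprime_dvd_right (index_map_dvd N hπ))
      (commutator_le_map hπ hcomm) (hH₁.map_of_ker_le hπ (hker.le.trans hPH₁))
      (hK.map_of_ker_le hπ (hker.le.trans inf_le_left)) rfl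
    obtain ⟨g, rfl⟩ := hπ g
    exact ⟨g, conj_smul_eq_of_map_mk' hPH₁ inf_le_left hg⟩
  · set M := normalizer (P : Set G)
    have hH₁M : H₁ ≤ M := by simpa only [ha] using le_normalizer_inf H₁ L
    have hKM : K ≤ M := le_normalizer_inf K L
    obtain ⟨g, hg⟩ := ih _ (card_lt_of_ne_top hPn) (N := N.subgroupOf M)
      (H := H₁.subgroupOf M) (K := K.subgroupOf M)
      ((hcop.coprime_dvd_left (card_comap_dvd_of_injective N M.subtype M.subtype_injective))
        |>.coprime_dvd_right (relIndex_dvd_index_of_normal N M))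
      (commutator_le_subgroupOf hcomm M) (hH₁.subgroupOf_of_le_right hH₁M)
      (hK.subgroupOf_of_le_right hKM) rfl
    exact ⟨g, conj_smul_eq_of_subgroupOf hH₁M hKM hg⟩

end SchurZassenhaus

end Subgroup

theorem stmt_5 {G : Type*} [Group G] [Finite G] (N K : Subgroup G) [N.Normal]
    (hcop : Nat.Coprime (Nat.card N) (Nat.card K))
    (hcomp : N.IsComplement' K)
    (g : G) (hg : orderOf g ∣ Nat.card K) :
    ∃ h : G, g ∈ K.map (MulAut.conj h).toMonoidHom := by
  have hdisj : Disjoint N (zpowers g) :=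
    disjoint_of_coprime_natCard (hcop.coprime_dvd_right (Nat.card_zpowers g ▸ hg))
  set L := N ⊔ zpowers g
  have hNL : N ≤ L := le_sup_left
  have hC := isComplement'_subgroupOf_sup hdisj
  obtain ⟨b, hb⟩ := exists_conj_smul_eq_of_isComplement'_of_commutator_le
    (by rw [card_subgroupOf_of_le hNL, hC.symm.index_eq_card, card_subgroupOf_of_le le_sup_right,
      Nat.card_zpowers]; exact hcop.coprime_dvd_right hg)
    (commutator_le_subgroupOf_sup_zpowers N g) hC (hcomp.subgroupOf_of_le_left hNL)
  rw [← inf_subgroupOf_right K] at hb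
  have hgK : MulAut.conj (b : G) • g ∈ K ⊓ L := by
    rw [← conj_smul_eq_of_subgroupOf le_sup_right inf_le_right hb]
    exact smul_mem_pointwise_smul g _ _ (mem_zpowers g)
  exact ⟨(b : G)⁻¹, _, hgK.1, by simp [mul_assoc]⟩
end

section
/- Let G be a finite group acting transitively on a finite set Ω, g a non-identity element of G, and α a fixed point of g. Then the centraliser C_G(g) acts transitively on the set Ω_g of fixed points of g if and only if g^G ∩ G_α = g^{G_α} (the G-conjugacy class of g intersected with the stabiliser equals the G_α-conjugacy class of g). -/
theorem stmt_7 {G : Type*} [Group G] [Finite G] {Ω : Type*} [Finite Ω] [MulAction G Ω]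
    [MulAction.IsPretransitive G Ω] (g : G) (hg : g ≠ 1) (α : Ω) (hα : g • α = α) :
    (∀ ω₁ ∈ {ω : Ω | g • ω = ω}, ∀ ω₂ ∈ {ω : Ω | g • ω = ω},
        ∃ c ∈ Subgroup.centralizer {g}, c • ω₁ = ω₂) ↔
      conjugatesOf g ∩ (MulAction.stabilizer G α : Set G) =
        {x : G | ∃ h ∈ MulAction.stabilizer G α, h * g * h⁻¹ = x} := by
  have cmem : ∀ c : G, c ∈ Subgroup.centralizer {g} ↔ g * c = c * g := by
    intro c
    rw [Subgroup.mem_centralizer_iff]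
    constructor
    · intro h; exact h g rfl
    · intro h x hx; rw [Set.mem_singleton_iff.mp hx]; exact h
  constructor
  · intro htrans
    ext x
    simp only [Set.mem_inter_iff, Set.mem_setOf_eq, SetLike.mem_coe,
      MulAction.mem_stabilizer_iff, conjugatesOf]
    constructor
    · rintro ⟨hconj, hxα⟩
      obtain ⟨k, hk⟩ := isConj_iff.mp hconj
      have h1 : g • (k⁻¹ • α) = k⁻¹ • α := by
        apply MulAction.injective k
        show k • (g • k⁻¹ • α) = k • (k⁻¹ • α)
        rw [smul_inv_smul, ← mul_smul, ← mul_smul, hk, hxα]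
      obtain ⟨c, hc, hcω⟩ := htrans (k⁻¹ • α) h1 α hα
      rw [cmem] at hc
      have h3 : c⁻¹ • α = k⁻¹ • α := by rw [inv_smul_eq_iff]; exact hcω.symm
      have e : c⁻¹ * g * c = g := by rw [mul_assoc, hc, inv_mul_cancel_left]
      refine ⟨k * c⁻¹, ?_, ?_⟩
      · rw [mul_smul, h3, smul_inv_smul]
      · rw [← hk, mul_inv_rev, inv_inv]
        calc k * c⁻¹ * g * (c * k⁻¹) = k * (c⁻¹ * g * c) * k⁻¹ := by
              simp only [mul_assoc]
          _ = k * g * k⁻¹ := by rw [e]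
    · rintro ⟨h, hh, rfl⟩
      have hh' : h⁻¹ • α = α := by rw [inv_smul_eq_iff, hh]
      exact ⟨isConj_iff.mpr ⟨h, rfl⟩, by rw [mul_smul, mul_smul, hh', hα, hh]⟩
  · intro heq ω₁ h1 ω₂ h2
    simp only [Set.mem_setOf_eq] at h1 h2
    obtain ⟨a, ha⟩ := MulAction.exists_smul_eq G ω₁ α
    obtain ⟨b, hb⟩ := MulAction.exists_smul_eq G ω₂ α
    have key : ∀ t : G, ∀ ω : Ω, g • ω = ω → t • ω = α →
        ∃ c : G, c ∈ Subgroup.centralizer {g} ∧ c • ω = α := by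
      intro t ω hω htω
      have hmem : t * g * t⁻¹ ∈ conjugatesOf g ∩ (MulAction.stabilizer G α : Set G) := by
        constructor
        · exact isConj_iff.mpr ⟨t, rfl⟩
        · simp only [SetLike.mem_coe, MulAction.mem_stabilizer_iff]
          rw [mul_smul, mul_smul, ← htω, inv_smul_smul, hω, htω]
      rw [heq] at hmem
      obtain ⟨h, hh, hhg⟩ := hmem
      rw [MulAction.mem_stabilizer_iff] at hh
      refine ⟨h⁻¹ * t, ?_, ?_⟩
      · rw [cmem]
        calc g * (h⁻¹ * t) = h⁻¹ * (h * g * h⁻¹) * t := by group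
          _ = h⁻¹ * (t * g * t⁻¹) * t := by rw [hhg]
          _ = h⁻¹ * t * g := by group
      · rw [mul_smul, htω, inv_smul_eq_iff, hh]
    obtain ⟨c₁, hc₁, hc₁ω⟩ := key a ω₁ h1 ha
    obtain ⟨c₂, hc₂, hc₂ω⟩ := key b ω₂ h2 hb
    refine ⟨c₂⁻¹ * c₁, Subgroup.mul_mem _ (Subgroup.inv_mem _ hc₂) hc₁, ?_⟩
    rw [mul_smul, hc₁ω, inv_smul_eq_iff, hc₂ω]
end

section
/- Let m be a positive integer and let A = B = {4m, 4m+1} ∪ {2n(r−1) : n ≥ 2, r an odd prime with n·r = 2m+1}. Then there are no a ∈ A and b ∈ B with 2b = a + 2 or 2a = b + 2. -/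
theorem stmt_16 (m : ℕ) (hm : 0 < m)
    (A : Set ℕ)
    (hA : A = {4 * m, 4 * m + 1} ∪
      {a : ℕ | ∃ n r : ℕ, 2 ≤ n ∧ r.Prime ∧ Odd r ∧ n * r = 2 * m + 1 ∧ a = 2 * n * (r - 1)}) :
    ¬ ∃ a ∈ A, ∃ b ∈ A, 2 * b = a + 2 ∨ 2 * a = b + 2 := by
  subst hA
  have key : ∀ x ∈ ({4 * m, 4 * m + 1} ∪
      {a : ℕ | ∃ n r : ℕ, 2 ≤ n ∧ r.Prime ∧ Odd r ∧ n * r = 2 * m + 1 ∧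
        a = 2 * n * (r - 1)} : Set ℕ),
      x = 4 * m ∨ x = 4 * m + 1 ∨
        ∃ n : ℕ, n % 2 = 1 ∧ 2 ≤ n ∧ 3 * n ≤ 2 * m + 1 ∧ x + 2 * n = 4 * m + 2 := by
    intro x hx
    rcases hx with hx | hx
    · rcases hx with hx | hx
      · exact Or.inl hx
      · exact Or.inr (Or.inl hx)
    · obtain ⟨n, r, hn, hr, hodd, hnr, hx⟩ := hx
      refine Or.inr (Or.inr ⟨n, ?_, hn, ?_, ?_⟩)
      · have h2 : Odd (n * r) := by rw [hnr]; exact ⟨m, by ring⟩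
        exact Nat.odd_iff.mp (Nat.odd_mul.mp h2).1
      · have hr3 : 3 ≤ r := by
          rcases hodd with ⟨k, hk⟩
          have := hr.two_le
          omega
        calc 3 * n = n * 3 := by ring
        _ ≤ n * r := Nat.mul_le_mul_left n hr3
        _ = 2 * m + 1 := hnr
      · have hr1 : 1 ≤ r := hr.one_lt.le
        have : x + 2 * n = 2 * n * ((r - 1) + 1) := by rw [hx]; ring
        rw [Nat.sub_add_cancel hr1] at this
        rw [this, show 2 * n * r = 2 * (n * r) by ring, hnr]; omega
  rintro ⟨a, ha, b, hb, h⟩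
  obtain ha' := key a ha
  obtain hb' := key b hb
  rcases ha' with h1 | h1 | ⟨n, hn1, hn2, hn3, hn4⟩ <;>
    rcases hb' with h2 | h2 | ⟨n', hn1', hn2', hn3', hn4'⟩ <;> omega
end
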